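/- arXiv:1205.0903 — 2 statements merged into one kernel-verified Lean document; each statement's English description precedes it below -/
import Mathlib

section
/- Let m ≥ 1 be a natural number and let z be a real number with 1 ≤ z ≤ 2^m. Then |P_m(z)| ≤ (1/2)·|P_m(−z)|, where P_m is evaluated at real arguments via the canonical map ℤ[X] → ℝ[X]. -/
open Polynomial

/-- The polynomial `P_m(X) = (X - 1) * ∏_{i=1}^m (X - 2^i)^2` over `ℤ`. -/
noncomputable def Pm (m : ℕ) : Polynomial ℤ :=
  (X - 1) * ∏ i ∈ Finset.Icc 1 m, (X - C ((2 : ℤ) ^ i)) ^ 2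

/-!
For `z ≥ 1` we have `|P_m(z)| = (z - 1) ∏ (z - 2^i)^2` and `|P_m(-z)| = (z + 1) ∏ (z + 2^i)^2`, and
`|z - 2^i| ≤ z + 2^i` for every `i`. Some `2^k` with `1 ≤ k ≤ m` lies within a factor `2` of `z`,
and for it even `3 |z - 2^k| ≤ z + 2^k`; so in fact `|P_m(z)| ≤ |P_m(-z)| / 9`.
-/
open Finset

theorem aeval_Pm {R : Type*} [CommRing R] (m : ℕ) (x : R) :
    aeval x (Pm m) = (x - 1) * ∏ i ∈ Icc 1 m, (x - 2 ^ i) ^ 2 := by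
  simp only [Pm, map_mul, map_prod, map_pow, map_sub, aeval_X, map_one, map_ofNat]

theorem exists_mem_Icc_two_pow_near {m : ℕ} (hm : 1 ≤ m) {z : ℝ} (hz1 : 1 ≤ z)
    (hz2 : z ≤ 2 ^ m) : ∃ k ∈ Icc 1 m, 2 ^ k ≤ 2 * z ∧ z ≤ 2 * 2 ^ k := by
  induction m, hm using Nat.le_induction with
  | base => exact ⟨1, by simp, by linarith, by linarith⟩
  | succ m hm ih =>
    by_cases hzm : z ≤ 2 ^ m
    · obtain ⟨k, hk, hk'⟩ := ih hzm
      exact ⟨k, Icc_subset_Icc_right m.le_succ hk, hk'⟩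
    · refine ⟨m + 1, by simp, ?_, by linarith [pow_pos (two_pos : (0 : ℝ) < 2) (m + 1)]⟩
      rw [pow_succ]
      linarith

theorem three_mul_abs_sub_le_add {a b : ℝ} (hab : a ≤ 2 * b) (hba : b ≤ 2 * a) :
    3 * |a - b| ≤ a + b := by
  have : |a - b| ≤ (a + b) / 3 := abs_sub_le_iff.2 ⟨by linarith, by linarith⟩
  linarith

theorem nine_mul_prod_sq_sub_le_prod_sq_add {ι : Type*} {s : Finset ι} {a : ι → ℝ} {z : ℝ}
    (hz : 0 ≤ z) (ha : ∀ i ∈ s, 0 ≤ a i) {k : ι} (hk : k ∈ s) (hzk : 3 * |z - a k| ≤ z + a k) :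
    9 * ∏ i ∈ s, (z - a i) ^ 2 ≤ ∏ i ∈ s, (z + a i) ^ 2 := by
  classical
  rw [← mul_prod_erase s _ hk, ← mul_prod_erase s _ hk, ← mul_assoc]
  have hk_sq : 9 * (z - a k) ^ 2 ≤ (z + a k) ^ 2 := by
    rw [← sq_abs (z - a k)]
    nlinarith [abs_nonneg (z - a k)]
  have hrest : ∏ i ∈ s.erase k, (z - a i) ^ 2 ≤ ∏ i ∈ s.erase k, (z + a i) ^ 2 :=
    prod_le_prod (fun i _ ↦ sq_nonneg _) fun i hi ↦
      sq_le_sq' (by linarith [ha i (mem_of_mem_erase hi)]) (by linarith [ha i (mem_of_mem_erase hi)])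
  exact mul_le_mul hk_sq hrest (prod_nonneg fun i _ ↦ sq_nonneg _) (sq_nonneg _)

theorem abs_Pm_le_half_abs_Pm_neg (m : ℕ) (hm : 1 ≤ m) (z : ℝ)
    (hz1 : 1 ≤ z) (hz2 : z ≤ 2 ^ m) :
    |Polynomial.aeval z (Pm m)| ≤ (1 / 2) * |Polynomial.aeval (-z) (Pm m)| := by
  obtain ⟨k, hk, hk_le, hz_le⟩ := exists_mem_Icc_two_pow_near hm hz1 hz2
  have hprod : 9 * ∏ i ∈ Icc 1 m, (z - 2 ^ i) ^ 2 ≤ ∏ i ∈ Icc 1 m, (z + 2 ^ i) ^ 2 :=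
    nine_mul_prod_sq_sub_le_prod_sq_add (by linarith) (fun i _ ↦ by positivity) hk
      (three_mul_abs_sub_le_add hz_le hk_le)
  have hneg : aeval (-z) (Pm m) = -((z + 1) * ∏ i ∈ Icc 1 m, (z + 2 ^ i) ^ 2) := by
    rw [aeval_Pm, ← neg_mul]
    congr 1
    · ring
    · exact prod_congr rfl fun i _ ↦ by ring
  have hA : 0 ≤ ∏ i ∈ Icc 1 m, (z - 2 ^ i) ^ 2 := prod_nonneg fun i _ ↦ sq_nonneg _
  have hB : 0 ≤ ∏ i ∈ Icc 1 m, (z + 2 ^ i) ^ 2 := prod_nonneg fun i _ ↦ sq_nonneg _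
  rw [aeval_Pm, hneg, abs_neg, abs_of_nonneg (mul_nonneg (by linarith) hA),
    abs_of_nonneg (mul_nonneg (by linarith) hB)]
  calc (z - 1) * ∏ i ∈ Icc 1 m, (z - 2 ^ i) ^ 2
      ≤ (z + 1) * ∏ i ∈ Icc 1 m, (z - 2 ^ i) ^ 2 := by gcongr; linarith
    _ ≤ (z + 1) * ((∏ i ∈ Icc 1 m, (z + 2 ^ i) ^ 2) / 9) :=
      mul_le_mul_of_nonneg_left (by linarith) (by linarith)
    _ ≤ 1 / 2 * ((z + 1) * ∏ i ∈ Icc 1 m, (z + 2 ^ i) ^ 2) := by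
      nlinarith [mul_nonneg (by linarith : 0 ≤ z + 1) hB]
end

section
/- Let (Ω, μ) be a probability space, let t be an odd natural number, let ε be a real number with 0 < ε ≤ 1/2, and let X : Fin t → Ω → ℝ be a family of independent random variables such that each X i takes only the values 0 and 1 and μ{ω : X i ω = 1} = 1/2 + ε for every i. Then the probability that ∑_{i} X i ω ≥ t/2 is at least 1 − (1/2)·(1 − 4ε²)^{t/2}, where the exponent t/2 is taken as a real power. -/
/-!
If fewer than half of the `X i` equal `1`, the outcome pattern `S = {i | X i ω = 1}` satisfies
`2 * #S < t`. Each such pattern has probability `p ^ #S * q ^ (t - #S) ≤ (p * q) ^ (t / 2)`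
(with `p = 1/2 + ε ≥ q = 1/2 - ε`), and complementation shows there are at most `2 ^ t / 2` of
them. Hence the majority fails with probability at most `(1/2) * (4 * p * q) ^ (t / 2)`,
and `4 * p * q = 1 - 4 * ε ^ 2`.
-/

open MeasureTheory ProbabilityTheory Finset

theorem two_mul_card_filter_two_mul_card_lt_le (α : Type*) [Fintype α] [DecidableEq α] :
    2 * #{S : Finset α | 2 * #S < Fintype.card α} ≤ 2 ^ Fintype.card α := by
  have hcompl : #{S : Finset α | 2 * #S < Fintype.card α}
      ≤ #{S : Finset α | ¬ 2 * #S < Fintype.card α} := by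
    refine card_le_card_of_injOn compl (fun S hS => ?_) compl_injective.injOn
    simp only [coe_filter, mem_univ, true_and, Set.mem_ofPred_eq, card_compl] at hS ⊢
    omega
  have htotal := card_filter_add_card_filter_not (s := (univ : Finset (Finset α)))
    (fun S => 2 * #S < Fintype.card α)
  rw [card_univ, Fintype.card_finset] at htotal
  omega

theorem Finset.prod_ite_mem_eq_pow_mul_pow {α M : Type*} [Fintype α] [DecidableEq α]
    [CommMonoid M] (S : Finset α) (a b : M) :
    ∏ i, (if i ∈ S then a else b) = a ^ #S * b ^ (Fintype.card α - #S) := by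
  rw [prod_ite, prod_const, prod_const, filter_mem_eq_inter, univ_inter, filter_not, card_sdiff]
  simp

theorem pow_mul_pow_sub_le_rpow_half {p q : ℝ} (hq : 0 ≤ q) (hqp : q ≤ p) {k m : ℕ}
    (hkm : 2 * k ≤ m) : p ^ k * q ^ (m - k) ≤ (p * q) ^ ((m : ℝ) / 2) := by
  set r := √(p * q)
  have hpq : 0 ≤ p * q := by nlinarith
  have hqr : q ≤ r := Real.le_sqrt_of_sq_le (by nlinarith)
  have hr2 : r ^ 2 = p * q := Real.sq_sqrt hpq
  have hsplit : m - k = k + (m - 2 * k) := by omega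
  calc p ^ k * q ^ (m - k) = (p * q) ^ k * q ^ (m - 2 * k) := by rw [hsplit]; ring
    _ ≤ (r ^ 2) ^ k * r ^ (m - 2 * k) := by rw [hr2]; gcongr
    _ = r ^ m := by rw [← pow_mul, ← pow_add]; congr 1; omega
    _ = (p * q) ^ ((m : ℝ) / 2) := by
      rw [show r = √(p * q) from rfl, Real.sqrt_eq_rpow, ← Real.rpow_natCast, ← Real.rpow_mul hpq]
      ring_nf

theorem sum_eq_card_filter_eq_one {ι : Type*} [Fintype ι] {x : ι → ℝ}
    (hx : ∀ i, x i = 0 ∨ x i = 1) : ∑ i, x i = #{i | x i = 1} := by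
  rw [← sum_boole]
  exact sum_congr rfl fun i _ => by rcases hx i with h | h <;> simp [h]

theorem measure_eq_zero_of_measure_eq_one {Ω : Type*} [MeasurableSpace Ω] {μ : Measure Ω}
    [IsProbabilityMeasure μ] {f : Ω → ℝ} {p : ℝ} (hf : Measurable f)
    (hval : ∀ ω, f ω = 0 ∨ f ω = 1) (hp0 : 0 ≤ p) (hp : μ {ω | f ω = 1} = ENNReal.ofReal p) :
    μ {ω | f ω = 0} = ENNReal.ofReal (1 - p) := by
  have hzero : {ω | f ω = 0} = {ω | f ω = 1}ᶜ := by
    ext ω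
    rcases hval ω with h | h <;> simp [h]
  rw [hzero, prob_compl_eq_one_sub (s := {ω | f ω = 1}) (hf (measurableSet_singleton 1)), hp,
    ENNReal.ofReal_sub _ hp0, ENNReal.ofReal_one]

section Bernoulli

variable {Ω ι : Type*} [Fintype ι] [DecidableEq ι] {X : ι → Ω → ℝ}

theorem setOf_sum_lt_half_subset (hval : ∀ i ω, X i ω = 0 ∨ X i ω = 1) :
    {ω | ∑ i, X i ω < (Fintype.card ι : ℝ) / 2} ⊆
      ⋃ S ∈ ({S | 2 * #S < Fintype.card ι} : Finset (Finset ι)),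
        ⋂ i ∈ (univ : Finset ι), X i ⁻¹' {if i ∈ S then 1 else 0} := by
  intro ω hω
  rw [Set.mem_ofPred_eq, sum_eq_card_filter_eq_one (hval · ω)] at hω
  refine Set.mem_iUnion₂.mpr ⟨({i | X i ω = 1} : Finset ι), ?_, ?_⟩
  · rw [mem_filter_univ]
    exact_mod_cast (by linarith : (2 * #{i | X i ω = 1} : ℝ) < Fintype.card ι)
  · simp only [Set.mem_iInter, Set.mem_preimage, Set.mem_singleton_iff, mem_filter, mem_univ,
      true_and]
    intro i _
    rcases hval i ω with h | h <;> simp [h]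

variable [MeasurableSpace Ω] {μ : Measure Ω} [IsProbabilityMeasure μ] {p : ℝ}

theorem measure_iInter_preimage_ite_eq (hmeas : ∀ i, Measurable (X i)) (hindep : iIndepFun X μ)
    (hval : ∀ i ω, X i ω = 0 ∨ X i ω = 1) (hp0 : 0 ≤ p) (hp1 : p ≤ 1)
    (hp : ∀ i, μ {ω | X i ω = 1} = ENNReal.ofReal p) (S : Finset ι) :
    μ (⋂ i ∈ (univ : Finset ι), X i ⁻¹' {if i ∈ S then 1 else 0})
      = ENNReal.ofReal (p ^ #S * (1 - p) ^ (Fintype.card ι - #S)) := by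
  have hfactor : ∀ i, μ (X i ⁻¹' {if i ∈ S then 1 else 0})
      = if i ∈ S then ENNReal.ofReal p else ENNReal.ofReal (1 - p) := by
    intro i
    split_ifs
    · exact hp i
    · exact measure_eq_zero_of_measure_eq_one (hmeas i) (hval i) hp0 (hp i)
  rw [hindep.measure_inter_preimage_eq_mul _ (fun _ _ => measurableSet_singleton _),
    prod_congr rfl (fun i _ => hfactor i), prod_ite_mem_eq_pow_mul_pow,
    ← ENNReal.ofReal_pow hp0, ← ENNReal.ofReal_pow (by linarith),
    ← ENNReal.ofReal_mul (by positivity)]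

theorem measure_sum_lt_half_le (hmeas : ∀ i, Measurable (X i)) (hindep : iIndepFun X μ)
    (hval : ∀ i ω, X i ω = 0 ∨ X i ω = 1) (hp : ∀ i, μ {ω | X i ω = 1} = ENNReal.ofReal p)
    (hhalf : 1 / 2 ≤ p) (hp1 : p ≤ 1) :
    μ {ω | ∑ i, X i ω < (Fintype.card ι : ℝ) / 2}
      ≤ ENNReal.ofReal (1 / 2 * (4 * p * (1 - p)) ^ ((Fintype.card ι : ℝ) / 2)) := by
  have hcard := two_mul_card_filter_two_mul_card_lt_le ι
  set m := Fintype.card ι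
  set 𝒮 : Finset (Finset ι) := {S | 2 * #S < m}
  have hpq : 0 ≤ p * (1 - p) := by nlinarith
  have hcount : (#𝒮 : ℝ) ≤ 2 ^ m / 2 := by
    rw [le_div_iff₀ two_pos]
    exact_mod_cast (by omega : #𝒮 * 2 ≤ 2 ^ m)
  have hfour : (4 * p * (1 - p)) ^ ((m : ℝ) / 2) = 2 ^ m * (p * (1 - p)) ^ ((m : ℝ) / 2) := by
    rw [mul_assoc, Real.mul_rpow (by norm_num) hpq, show (4 : ℝ) = 2 ^ (2 : ℝ) by norm_num,
      ← Real.rpow_mul (by norm_num), ← Real.rpow_natCast]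
    ring_nf
  calc μ {ω | ∑ i, X i ω < (m : ℝ) / 2}
      ≤ μ (⋃ S ∈ 𝒮, ⋂ i ∈ (univ : Finset ι), X i ⁻¹' {if i ∈ S then 1 else 0}) :=
        measure_mono (setOf_sum_lt_half_subset hval)
    _ ≤ ∑ S ∈ 𝒮, μ (⋂ i ∈ (univ : Finset ι), X i ⁻¹' {if i ∈ S then 1 else 0}) :=
        measure_biUnion_finset_le _ _
    _ ≤ ∑ S ∈ 𝒮, ENNReal.ofReal ((p * (1 - p)) ^ ((m : ℝ) / 2)) := by
        refine sum_le_sum fun S hS => ?_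
        rw [measure_iInter_preimage_ite_eq hmeas hindep hval (by linarith) hp1 hp]
        exact ENNReal.ofReal_le_ofReal <| pow_mul_pow_sub_le_rpow_half (by linarith)
          (by linarith) ((mem_filter_univ _).mp hS).le
    _ = ENNReal.ofReal (#𝒮 * (p * (1 - p)) ^ ((m : ℝ) / 2)) := by
        rw [sum_const, nsmul_eq_mul, ENNReal.ofReal_mul (by positivity), ENNReal.ofReal_natCast]
    _ ≤ ENNReal.ofReal (1 / 2 * (4 * p * (1 - p)) ^ ((m : ℝ) / 2)) := by
        rw [hfour]
        refine ENNReal.ofReal_le_ofReal ?_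
        calc (#𝒮 : ℝ) * (p * (1 - p)) ^ ((m : ℝ) / 2)
            ≤ 2 ^ m / 2 * (p * (1 - p)) ^ ((m : ℝ) / 2) := by gcongr
          _ = 1 / 2 * (2 ^ m * (p * (1 - p)) ^ ((m : ℝ) / 2)) := by ring

theorem ofReal_one_sub_le_measure_half_le_sum (hmeas : ∀ i, Measurable (X i))
    (hindep : iIndepFun X μ) (hval : ∀ i ω, X i ω = 0 ∨ X i ω = 1)
    (hp : ∀ i, μ {ω | X i ω = 1} = ENNReal.ofReal p) (hhalf : 1 / 2 ≤ p) (hp1 : p ≤ 1) :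
    ENNReal.ofReal (1 - 1 / 2 * (4 * p * (1 - p)) ^ ((Fintype.card ι : ℝ) / 2))
      ≤ μ {ω | (Fintype.card ι : ℝ) / 2 ≤ ∑ i, X i ω} := by
  have hbad := measure_sum_lt_half_le hmeas hindep hval hp hhalf hp1
  have hgood : MeasurableSet {ω | (Fintype.card ι : ℝ) / 2 ≤ ∑ i, X i ω} :=
    measurableSet_le measurable_const (Finset.measurable_sum _ fun i _ => hmeas i)
  have hbad_eq : {ω | ∑ i, X i ω < (Fintype.card ι : ℝ) / 2}
      = {ω | (Fintype.card ι : ℝ) / 2 ≤ ∑ i, X i ω}ᶜ := by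
    ext ω
    simp
  rw [hbad_eq, prob_compl_eq_one_sub hgood] at hbad
  have hbound_nonneg : 0 ≤ 1 / 2 * (4 * p * (1 - p)) ^ ((Fintype.card ι : ℝ) / 2) :=
    mul_nonneg (by norm_num) (Real.rpow_nonneg (by nlinarith) _)
  rw [ENNReal.ofReal_sub _ hbound_nonneg, ENNReal.ofReal_one]
  exact tsub_le_iff_tsub_le.mp hbad

end Bernoulli

theorem chernoff_like_majority_general
    {Ω : Type*} [MeasurableSpace Ω] (μ : Measure Ω) [IsProbabilityMeasure μ]
    (t : ℕ) (ε : ℝ) (hε0 : 0 < ε) (hε : ε ≤ 1 / 2)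
    (X : Fin t → Ω → ℝ) (hmeas : ∀ i, Measurable (X i))
    (hindep : iIndepFun X μ)
    (hval : ∀ i ω, X i ω = 0 ∨ X i ω = 1)
    (hp : ∀ i, μ {ω | X i ω = 1} = ENNReal.ofReal (1 / 2 + ε)) :
    ENNReal.ofReal (1 - (1 / 2) * (1 - 4 * ε ^ 2) ^ ((t : ℝ) / 2)) ≤
      μ {ω | (t : ℝ) / 2 ≤ ∑ i, X i ω} := by
  have h := ofReal_one_sub_le_measure_half_le_sum hmeas hindep hval hp (by linarith) (by linarith)
  rwa [Fintype.card_fin, show 4 * (1 / 2 + ε) * (1 - (1 / 2 + ε)) = 1 - 4 * ε ^ 2 by ring] at h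

theorem chernoff_like_majority
    {Ω : Type*} [MeasurableSpace Ω] (μ : Measure Ω) [IsProbabilityMeasure μ]
    (t : ℕ) (ht : Odd t) (ε : ℝ) (hε0 : 0 < ε) (hε : ε ≤ 1 / 2)
    (X : Fin t → Ω → ℝ) (hmeas : ∀ i, Measurable (X i))
    (hindep : iIndepFun X μ)
    (hval : ∀ i ω, X i ω = 0 ∨ X i ω = 1)
    (hp : ∀ i, μ {ω | X i ω = 1} = ENNReal.ofReal (1 / 2 + ε)) :
    ENNReal.ofReal (1 - (1 / 2) * (1 - 4 * ε ^ 2) ^ ((t : ℝ) / 2)) ≤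
      μ {ω | (t : ℝ) / 2 ≤ ∑ i, X i ω} :=
  chernoff_like_majority_general μ t ε hε0 hε X hmeas hindep hval hp
end
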